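/- arXiv:1503.00667 — 2 statements merged into one kernel-verified Lean document; each statement's English description precedes it below -/
import Mathlib

section
/- Let 𝔐 = {Y_i : i ∈ I} be a nonempty family of nonempty metric spaces such that every Y_i is not shifted and Y_i does not embed isometrically into Y_j whenever i ≠ j. If there exists ε > 0 such that every Y_i is ε-connected, then there exists a metric space X that is a disjoint union of the Y_i (i.e. X admits a partition {X_i : i ∈ I} into nonempty sets with X_i, carrying the induced metric, isometric to Y_i for every i) and is a minimal 𝔐-universal metric space. -/
universe u v w

open Function Set

/-- `f` is an isometric (distance-preserving) embedding of metric spaces. -/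
def IsIsomEmb {X : Type u} {Y : Type v} [MetricSpace X] [MetricSpace Y] (f : X → Y) : Prop :=
  ∀ a b : X, dist (f a) (f b) = dist a b

/-- `X` embeds isometrically into `Y`. -/
def IsomEmbeds (X : Type u) (Y : Type v) [MetricSpace X] [MetricSpace Y] : Prop :=
  ∃ f : X → Y, IsIsomEmb f

/-- `X` and `Y` are isometric: there is a surjective isometric embedding of `X` onto `Y`. -/
def IsIsometricTo (X : Type u) (Y : Type v) [MetricSpace X] [MetricSpace Y] : Prop :=
  ∃ f : X → Y, IsIsomEmb f ∧ Surjective f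

/-- `X` is not shifted: every isometric self-embedding of `X` is surjective. -/
def NotShifted (X : Type u) [MetricSpace X] : Prop :=
  ∀ f : X → X, IsIsomEmb f → Surjective f

/-- `Y` is universal for the family `M` of metric spaces. -/
def UnivFor {ι : Type w} (M : ι → Type u) [∀ i, MetricSpace (M i)]
    (Y : Type v) [MetricSpace Y] : Prop :=
  ∀ i, IsomEmbeds (M i) Y

/-- `Y` is minimal universal for the family `M` of metric spaces: `Y` is `M`-universal and
every subset of `Y` (with the induced metric) which is `M`-universal equals `Y`. -/
def MinUnivFor {ι : Type w} (M : ι → Type u) [∀ i, MetricSpace (M i)]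
    (Y : Type v) [MetricSpace Y] : Prop :=
  UnivFor M Y ∧ ∀ S : Set Y, UnivFor M ↥S → S = Set.univ

/-- `X` is a disjoint union of the members of the family `M` (it admits a partition into
nonempty pieces, the `i`-th piece being isometric to `M i`) and is minimal `M`-universal. -/
def IsMinUnivDisjointUnion {ι : Type w} (M : ι → Type u) [∀ i, MetricSpace (M i)]
    (X : Type v) [MetricSpace X] : Prop :=
  ∃ P : ι → Set X,
    (∀ i, (P i).Nonempty) ∧
    (∀ i j, i ≠ j → Disjoint (P i) (P j)) ∧
    (⋃ i, P i) = Set.univ ∧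
    (∀ i, IsIsometricTo ↥(P i) (M i)) ∧
    MinUnivFor M X

/-
Glue the spaces `M i` into their disjoint union, putting points of different components
at distance `d(x, pᵢ) + c + d(pⱼ, y)` for base points `pᵢ` and a gap `c > ε`. An isometric
copy of the `ε`-connected space `M i` inside a subset `S` cannot cross the gap, so it lies
in a single component `M j`; then `M i` embeds isometrically into `M j`, forcing `j = i`,
and since `M i` is not shifted the copy is the whole `i`-th component. Hence a universal
`S` is everything.
-/

def IsChainConnected (ε : ℝ) (X : Type*) [PseudoMetricSpace X] : Prop :=
  ∀ x y : X, ∃ (n : ℕ) (c : Fin (n + 1) → X),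
    c 0 = x ∧ c (Fin.last n) = y ∧ ∀ k : Fin n, dist (c k.castSucc) (c k.succ) ≤ ε

theorem IsChainConnected.apply_eq {X β : Type*} [PseudoMetricSpace X] {ε : ℝ}
    (hX : IsChainConnected ε X) {f : X → β} (hf : ∀ x y, dist x y ≤ ε → f x = f y) (x y : X) :
    f x = f y := by
  obtain ⟨n, c, rfl, rfl, hc⟩ := hX x y
  have h : ∀ k : Fin (n + 1), f (c 0) = f (c k) := by
    intro k
    induction k using Fin.induction with
    | zero => rfl
    | succ k ih => exact ih.trans (hf _ _ (hc k))
  exact h _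

theorem isIsomEmb_iff_isometry {X Y : Type*} [MetricSpace X] [MetricSpace Y] {f : X → Y} :
    IsIsomEmb f ↔ Isometry f :=
  ⟨Isometry.of_dist_eq, Isometry.dist_eq⟩

theorem IsometryEquiv.isIsometricTo {X Y : Type*} [MetricSpace X] [MetricSpace Y] (e : X ≃ᵢ Y) :
    IsIsometricTo X Y :=
  ⟨e, e.isometry.dist_eq, e.surjective⟩

namespace Sigma

variable {ι : Type*} {E : ι → Type*} [∀ i, MetricSpace (E i)]

open scoped Classical in
noncomputable def gapDist (p : ∀ i, E i) (c : ℝ) (a b : Σ i, E i) : ℝ :=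
  if h : a.1 = b.1 then dist (cast (congrArg E h) a.2) b.2
  else dist a.2 (p a.1) + c + dist (p b.1) b.2

variable (p : ∀ i, E i) {c : ℝ}

theorem gapDist_mk_mk_self (c : ℝ) (i : ι) (x y : E i) :
    gapDist p c ⟨i, x⟩ ⟨i, y⟩ = dist x y := by
  simp [gapDist]

theorem gapDist_mk_mk_of_ne (c : ℝ) {i j : ι} (hij : i ≠ j) (x : E i) (y : E j) :
    gapDist p c ⟨i, x⟩ ⟨j, y⟩ = dist x (p i) + c + dist (p j) y := by
  simp [gapDist, hij]

theorem le_gapDist_of_fst_ne {a b : Σ i, E i} (h : a.1 ≠ b.1) : c ≤ gapDist p c a b := by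
  obtain ⟨i, x⟩ := a
  obtain ⟨j, y⟩ := b
  rw [gapDist_mk_mk_of_ne p c h]
  linarith [dist_nonneg (x := x) (y := p i), dist_nonneg (x := p j) (y := y)]

theorem gapDist_comm (c : ℝ) (a b : Σ i, E i) : gapDist p c a b = gapDist p c b a := by
  obtain ⟨i, x⟩ := a
  obtain ⟨j, y⟩ := b
  rcases eq_or_ne i j with rfl | hij
  · simp only [gapDist_mk_mk_self, dist_comm]
  · rw [gapDist_mk_mk_of_ne p c hij, gapDist_mk_mk_of_ne p c hij.symm, dist_comm x, dist_comm y]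
    ring

theorem gapDist_triangle (hc : 0 ≤ c) (a b d : Σ i, E i) :
    gapDist p c a d ≤ gapDist p c a b + gapDist p c b d := by
  obtain ⟨i, x⟩ := a
  obtain ⟨j, y⟩ := b
  obtain ⟨k, z⟩ := d
  have hy := dist_nonneg (x := y) (y := p j)
  rcases eq_or_ne i j with rfl | hij <;> rcases eq_or_ne i k with rfl | hik
  · simpa only [gapDist_mk_mk_self] using dist_triangle x y z
  · simp only [gapDist_mk_mk_self, gapDist_mk_mk_of_ne p c hik]
    linarith [dist_triangle x y (p i)]
  · simp only [gapDist_mk_mk_self, gapDist_mk_mk_of_ne p c hij, gapDist_mk_mk_of_ne p c hij.symm,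
      dist_comm (p j) y]
    linarith [dist_triangle x (p i) z]
  · rcases eq_or_ne j k with rfl | hjk
    · simp only [gapDist_mk_mk_self, gapDist_mk_mk_of_ne p c hij]
      linarith [dist_triangle (p j) y z]
    · simp only [gapDist_mk_mk_of_ne p c hik, gapDist_mk_mk_of_ne p c hij,
        gapDist_mk_mk_of_ne p c hjk, dist_comm (p j) y]
      linarith

variable (E) in
theorem exists_metricSpace_fst_eq_of_dist_le [∀ i, Nonempty (E i)] (ε : ℝ) :
    ∃ _ : MetricSpace (Σ i, E i), (∀ i, Isometry (Sigma.mk i : E i → Σ k, E k)) ∧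
      ∀ a b : Σ i, E i, dist a b ≤ ε → a.1 = b.1 := by
  let p i := Classical.arbitrary (E i)
  have hc : 0 < |ε| + 1 := by positivity
  let _ : MetricSpace (Σ i, E i) :=
    { dist := gapDist p (|ε| + 1)
      dist_self := fun ⟨i, x⟩ => by rw [gapDist_mk_mk_self, dist_self]
      dist_comm := gapDist_comm p _
      dist_triangle := gapDist_triangle p hc.le
      eq_of_dist_eq_zero := fun {a b} h => by
        by_contra hab
        obtain ⟨i, x⟩ := a
        obtain ⟨j, y⟩ := b
        rcases eq_or_ne i j with rfl | hij
        · exact hab (congrArg _ (dist_eq_zero.mp ((gapDist_mk_mk_self p _ i x y).symm.trans h)))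
        · exact hc.not_ge (h ▸ le_gapDist_of_fst_ne p hij)
      edist_dist := fun _ _ => rfl }
  refine ⟨_, fun i => Isometry.of_dist_eq (gapDist_mk_mk_self p _ i), fun a b hab => ?_⟩
  by_contra hne
  have hgap : gapDist p (|ε| + 1) a b ≤ ε := hab
  linarith [le_gapDist_of_fst_ne p (c := |ε| + 1) hne, le_abs_self ε]

theorem exists_isometry_eq_mk_of_fst_eq {X : Type*} [PseudoMetricSpace X]
    [MetricSpace (Σ i, E i)] {j : ι} (hmk : Isometry (Sigma.mk j : E j → Σ k, E k))
    {f : X → Σ i, E i} (hf : Isometry f) (hfj : ∀ x, (f x).1 = j) :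
    ∃ g : X → E j, Isometry g ∧ ∀ x, f x = ⟨j, g x⟩ := by
  have hfg : ∀ x, f x = ⟨j, cast (congrArg E (hfj x)) (f x).2⟩ :=
    fun x => Sigma.ext (hfj x) (cast_heq _ _).symm
  refine ⟨_, Isometry.of_dist_eq fun x y => ?_, hfg⟩
  rw [← hmk.dist_eq, ← hfg, ← hfg, hf.dist_eq]

end Sigma

section SigmaMinUniv

variable {ι : Type*} (M : ι → Type*) [∀ i, MetricSpace (M i)] [MetricSpace (Σ i, M i)]

theorem minUnivFor_sigma {ε : ℝ} (hmk : ∀ i, Isometry (Sigma.mk i : M i → Σ k, M k))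
    (hsep : ∀ a b : Σ i, M i, dist a b ≤ ε → a.1 = b.1) (hns : ∀ i, NotShifted (M i))
    (hinc : ∀ i j, i ≠ j → ¬ IsomEmbeds (M i) (M j)) (hconn : ∀ i, IsChainConnected ε (M i)) :
    MinUnivFor M (Σ i, M i) := by
  refine ⟨fun i => ⟨_, isIsomEmb_iff_isometry.2 (hmk i)⟩, fun S hS => ?_⟩
  refine eq_univ_of_forall fun ⟨i, y⟩ => ?_
  obtain ⟨f, hf⟩ := hS i
  have hf' : Isometry (fun x => (f x : Σ i, M i)) :=
    isometry_subtype_coe.comp (isIsomEmb_iff_isometry.1 hf)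
  -- `f` cannot jump across the gap between components
  obtain ⟨j, hj⟩ : ∃ j, ∀ x, (f x : Σ i, M i).1 = j := by
    refine ⟨_, fun x => (hconn i).apply_eq (f := fun x => (f x : Σ i, M i).1) ?_ x y⟩
    exact fun x x' hxx' => hsep _ _ ((hf'.dist_eq x x').trans_le hxx')
  obtain ⟨g, hg, hfg⟩ := Sigma.exists_isometry_eq_mk_of_fst_eq (hmk j) hf' hj
  obtain rfl : i = j := by
    by_contra hij
    exact hinc _ _ hij ⟨g, hg.dist_eq⟩
  obtain ⟨x, rfl⟩ := hns i g (isIsomEmb_iff_isometry.2 hg) y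
  rw [← hfg x]
  exact (f x).2

theorem isMinUnivDisjointUnion_sigma [∀ i, Nonempty (M i)]
    (hmk : ∀ i, Isometry (Sigma.mk i : M i → Σ k, M k)) (hmin : MinUnivFor M (Σ i, M i)) :
    IsMinUnivDisjointUnion M (Σ i, M i) := by
  refine ⟨fun i => range (Sigma.mk i), fun i => range_nonempty _, fun i j hij => ?_, ?_,
    fun i => (hmk i).isometryEquivOnRange.symm.isIsometricTo, hmin⟩
  · simpa only [range_sigmaMk] using (disjoint_singleton.2 hij).preimage Sigma.fst
  · simp only [range_sigmaMk, ← preimage_iUnion, iUnion_of_singleton, preimage_univ]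

end SigmaMinUniv

theorem statement14_general {ι : Type w} (M : ι → Type u)
    [instM : ∀ i, MetricSpace (M i)] [∀ i, Nonempty (M i)]
    (hns : ∀ i, NotShifted (M i))
    (hinc : ∀ i j, i ≠ j → ¬ IsomEmbeds (M i) (M j))
    (ε : ℝ)
    (hconn : ∀ i, ∀ x y : M i, ∃ (n : ℕ) (c : Fin (n + 1) → M i),
      c 0 = x ∧ c (Fin.last n) = y ∧
      ∀ k : Fin n, dist (c k.castSucc) (c k.succ) ≤ ε) :
    ∃ (X : Type (max u w)) (instX : MetricSpace X),
      @IsMinUnivDisjointUnion ι M instM X instX := by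
  obtain ⟨_, hmk, hsep⟩ := Sigma.exists_metricSpace_fst_eq_of_dist_le M ε
  exact ⟨_, _, isMinUnivDisjointUnion_sigma M hmk (minUnivFor_sigma M hmk hsep hns hinc hconn)⟩

/-- Let `M` be a nonempty family of nonempty metric spaces, each not shifted, no member
embedding isometrically into another, and all `ε`-connected for a common `ε > 0`. Then
there is a metric space which is a disjoint union of the members of `M` and is a minimal
`M`-universal metric space. -/
theorem statement14 {ι : Type w} [Nonempty ι] (M : ι → Type u)
    [instM : ∀ i, MetricSpace (M i)] [∀ i, Nonempty (M i)]
    (hns : ∀ i, NotShifted (M i))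
    (hinc : ∀ i j, i ≠ j → ¬ IsomEmbeds (M i) (M j))
    (ε : ℝ) (hε : 0 < ε)
    (hconn : ∀ i, ∀ x y : M i, ∃ (n : ℕ) (c : Fin (n + 1) → M i),
      c 0 = x ∧ c (Fin.last n) = y ∧
      ∀ k : Fin n, dist (c k.castSucc) (c k.succ) ≤ ε) :
    ∃ (X : Type (max u w)) (instX : MetricSpace X),
      @IsMinUnivDisjointUnion ι M instM X instX :=
  statement14_general M (instM := instM) hns hinc ε hconn
end

section
/- Let 𝔐 be the family of all closed intervals [a, b] ⊆ ℝ with b − a < 1, each carrying the metric induced from ℝ, and let I be the open interval (0, 1) ⊆ ℝ with the induced metric. Then I is a minimal 𝔐-universal metric space, and every minimal 𝔐-universal metric space is isometric to I. -/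
universe u v w

open Function Set

/-- Index of the family of all closed intervals `[a, b] ⊆ ℝ` with `a ≤ b` and `b - a < 1`. -/
def Idx17 : Type := {p : ℝ × ℝ // p.1 ≤ p.2 ∧ p.2 - p.1 < 1}

/-- The family of all closed intervals `[a, b] ⊆ ℝ` with `b - a < 1`, each carrying the
metric induced from `ℝ`. -/
abbrev M17 (p : Idx17) : Type := ↥(Set.Icc p.val.1 p.val.2)

/-!
A minimal universal space `X` for intervals of length `< 1` is rigid: if some point `x` could be
avoided by arbitrarily long isometric segments, then `X \ {x}` would still be universal. So every
finite set of points lies on every sufficiently long segment. Fixing `x₀, x₁` at distance `1/2`,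
the map `x ↦ d(x, x₀)² - d(x, x₁)²` is then affine with slope `±1` along each such segment,
hence an isometric embedding `φ : X → ℝ`. Its range is order-connected and contains intervals of
every length `< 1`, so it contains `(a, a + 1)` for `a = inf (range φ)`; by minimality it equals it.

Minimality of `(0, 1)` itself is simpler: by the intermediate value theorem an isometric copy of
`[0, L]` inside `(0, 1)` is an interval of length `L`, and it contains `t` once
`L ≥ max t (1 - t)`.
-/

section IsometricEmbeddings

variable {X Y Z : Type*} [MetricSpace X] [MetricSpace Y] [MetricSpace Z]

lemma IsIsomEmb.comp {f : Y → Z} {g : X → Y} (hf : IsIsomEmb f) (hg : IsIsomEmb g) :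
    IsIsomEmb (f ∘ g) :=
  fun a b => (hf _ _).trans (hg a b)

lemma isIsomEmb_subtype_val (S : Set X) : IsIsomEmb (Subtype.val : S → X) :=
  fun _ _ => rfl

lemma IsomEmbeds.trans : IsomEmbeds X Y → IsomEmbeds Y Z → IsomEmbeds X Z
  | ⟨g, hg⟩, ⟨f, hf⟩ => ⟨f ∘ g, hf.comp hg⟩

lemma IsIsomEmb.isomEmbeds_of_range_subset {f : X → Y} (hf : IsIsomEmb f) {S : Set Y}
    (hS : range f ⊆ S) : IsomEmbeds X S :=
  ⟨fun x => ⟨f x, hS (mem_range_self x)⟩, fun a b => hf a b⟩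

lemma IsIsomEmb.exists_lift {φ : X → Y} (hφ : IsIsomEmb φ) {g : Z → Y} (hg : IsIsomEmb g)
    (h : range g ⊆ range φ) : ∃ w : Z → X, IsIsomEmb w ∧ φ ∘ w = g := by
  choose w hw using fun z => h (mem_range_self z)
  refine ⟨w, fun a b => ?_, funext hw⟩
  rw [← hφ, hw, hw, hg]

lemma UnivFor.preimage {ι : Type*} {M : ι → Type*} [∀ i, MetricSpace (M i)] {φ : X → Y}
    (hφ : IsIsomEmb φ) {T : Set Y} (hT : T ⊆ range φ) (hU : UnivFor M T) :
    UnivFor M (φ ⁻¹' T) := by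
  intro i
  obtain ⟨f, hf⟩ := hU i
  obtain ⟨w, hw, hφw⟩ := hφ.exists_lift ((isIsomEmb_subtype_val T).comp hf)
    (by rintro _ ⟨z, rfl⟩; exact hT (f z).2)
  refine hw.isomEmbeds_of_range_subset ?_
  rintro _ ⟨z, rfl⟩
  rw [mem_preimage, ← Function.comp_apply (f := φ), hφw]
  exact (f z).2

end IsometricEmbeddings

lemma isomEmbeds_Icc_of_Icc_subset {a b c : ℝ} {S : Set ℝ} (h : Icc c (c + (b - a)) ⊆ S) :
    IsomEmbeds (Icc a b) S := by
  refine IsIsomEmb.isomEmbeds_of_range_subset (f := fun u : Icc a b => u - a + c)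
    (fun u v => by simp only [Subtype.dist_eq, Real.dist_eq]; ring_nf) ?_
  rintro _ ⟨u, rfl⟩
  exact h ⟨by linarith [u.2.1], by linarith [u.2.2]⟩

lemma IsIsomEmb.exists_Icc_subset_range {L : ℝ} (hL : 0 ≤ L) {F : Icc (0 : ℝ) L → ℝ}
    (hF : IsIsomEmb F) : ∃ c, Icc c (c + L) ⊆ range F := by
  have := Subtype.preconnectedSpace (isPreconnected_Icc (a := (0 : ℝ)) (b := L))
  have hcont := (Isometry.of_dist_eq hF).continuous
  let p : Icc (0 : ℝ) L := ⟨0, le_rfl, hL⟩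
  let q : Icc (0 : ℝ) L := ⟨L, hL, le_rfl⟩
  have hpq : |F q - F p| = L := by
    simpa [p, q, Subtype.dist_eq, Real.dist_eq, abs_of_nonneg hL] using hF q p
  rcases (abs_eq hL).1 hpq with h | h
  · refine ⟨F p, ?_⟩
    simpa [show F p + L = F q by linarith] using intermediate_value_univ p q hcont
  · refine ⟨F q, ?_⟩
    simpa [show F q + L = F p by linarith] using intermediate_value_univ q p hcont

lemma Ioo_csInf_subset_of_forall_exists_Icc_subset {Y : Set ℝ} (hY : Y.OrdConnected)
    (hbdd : BddBelow Y) (hne : Y.Nonempty)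
    (hlong : ∀ L, 0 ≤ L → L < 1 → ∃ c, Icc c (c + L) ⊆ Y) :
    Ioo (sInf Y) (sInf Y + 1) ⊆ Y := by
  rintro t ⟨hat, hta⟩
  obtain ⟨y, hy, hyt⟩ := exists_lt_of_csInf_lt hne hat
  obtain ⟨c, hc⟩ := hlong (t - sInf Y) (by linarith) (by linarith)
  have hac : sInf Y ≤ c := csInf_le hbdd (hc ⟨le_rfl, by linarith⟩)
  exact hY.out hy (hc ⟨by linarith, le_rfl⟩) ⟨hyt.le, by linarith⟩

lemma dist_sq_sub_dist_sq_of_isIsomEmb {X : Type*} [MetricSpace X] {S : Set ℝ} {g : S → X}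
    (hg : IsIsomEmb g) {s₀ s₁ : S} (h : dist s₀ s₁ = 1 / 2) (s t : S) :
    dist (dist (g s) (g s₀) ^ 2 - dist (g s) (g s₁) ^ 2)
      (dist (g t) (g s₀) ^ 2 - dist (g t) (g s₁) ^ 2) = dist (g s) (g t) := by
  have hg' : ∀ a b, dist (g a) (g b) = |(a : ℝ) - b| := hg
  simp only [hg', Subtype.dist_eq, Real.dist_eq, sq_abs] at h ⊢
  rw [show (s - s₀ : ℝ) ^ 2 - (s - s₁) ^ 2 - ((t - s₀) ^ 2 - (t - s₁) ^ 2)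
      = (s - t) * (2 * (s₁ - s₀)) by ring, abs_mul, abs_mul, abs_sub_comm (s₁ : ℝ), h]
  norm_num

lemma univFor_M17_iff {X : Type*} [MetricSpace X] :
    UnivFor M17 X ↔ ∀ L : ℝ, 0 ≤ L → L < 1 → IsomEmbeds (Icc (0 : ℝ) L) X := by
  refine ⟨fun h L h0 h1 => h ⟨(0, L), h0, by simpa using h1⟩, fun h p => ?_⟩
  exact (isomEmbeds_Icc_of_Icc_subset (c := 0) (by simp)).trans
    (h (p.1.2 - p.1.1) (sub_nonneg.2 p.2.1) p.2.2)

lemma univFor_Ioo {a b : ℝ} (hab : 1 ≤ b - a) : UnivFor M17 (Ioo a b) :=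
  univFor_M17_iff.2 fun L _ h1 =>
    isomEmbeds_Icc_of_Icc_subset (c := a + (1 - L) / 2) (Icc_subset_Ioo (by linarith) (by linarith))

lemma minUnivFor_Ioo_zero_one : MinUnivFor M17 (Ioo (0 : ℝ) 1) := by
  refine ⟨univFor_Ioo (by norm_num),
    fun S hS => eq_univ_of_forall fun ⟨t, ht0, ht1⟩ => ?_⟩
  set L := max t (1 - t)
  have hL0 : 0 ≤ L := ht0.le.trans (le_max_left _ _)
  obtain ⟨f, hf⟩ := univFor_M17_iff.1 hS L hL0 (max_lt ht1 (by linarith))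
  have hF := (isIsomEmb_subtype_val _).comp ((isIsomEmb_subtype_val S).comp hf)
  obtain ⟨c, hc⟩ := hF.exists_Icc_subset_range hL0
  have hIoo : range (fun u => ((f u : Ioo (0 : ℝ) 1) : ℝ)) ⊆ Ioo 0 1 := by
    rintro _ ⟨u, rfl⟩; exact (f u : Ioo (0 : ℝ) 1).2
  have hc0 := (hIoo (hc ⟨le_rfl, by linarith⟩)).1
  have hc1 := (hIoo (hc ⟨by linarith, le_rfl⟩)).2
  obtain ⟨u, hu⟩ := hc (show t ∈ Icc c (c + L) from
    ⟨by linarith [le_max_right t (1 - t)], by linarith [le_max_left t (1 - t)]⟩)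
  exact (Subtype.ext hu : (f u : Ioo (0 : ℝ) 1) = ⟨t, ht0, ht1⟩) ▸ (f u).2

namespace MinUnivFor

variable {X : Type*} [MetricSpace X]

lemma exists_mem_range_of_long (h : MinUnivFor M17 X) (x : X) :
    ∃ ℓ, 0 ≤ ℓ ∧ ℓ < 1 ∧ ∀ L, ℓ ≤ L → L < 1 →
      ∀ g : Icc (0 : ℝ) L → X, IsIsomEmb g → x ∈ range g := by
  by_contra! hx
  have huniv : UnivFor M17 ({x}ᶜ : Set X) := univFor_M17_iff.2 fun ℓ h0 h1 => by
    obtain ⟨L, hℓL, hL1, g, hg, hxg⟩ := hx ℓ h0 h1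
    refine (isomEmbeds_Icc_of_Icc_subset (c := 0) (Icc_subset_Icc le_rfl ?_)).trans
      (hg.isomEmbeds_of_range_subset (by simpa using hxg))
    simpa using hℓL
  simpa using h.2 _ huniv

lemma exists_forall_mem_range_of_long (h : MinUnivFor M17 X) (s : Finset X) :
    ∃ ℓ, 0 ≤ ℓ ∧ ℓ < 1 ∧ ∀ L, ℓ ≤ L → L < 1 →
      ∀ g : Icc (0 : ℝ) L → X, IsIsomEmb g → ∀ x ∈ s, x ∈ range g := by
  classical
  induction s using Finset.induction_on with
  | empty => exact ⟨0, le_rfl, one_pos, fun _ _ _ _ _ => by simp⟩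
  | insert x s _ ih =>
    obtain ⟨ℓ, h0, h1, hs⟩ := ih
    obtain ⟨ℓx, -, h1x, hx⟩ := h.exists_mem_range_of_long x
    refine ⟨max ℓx ℓ, h0.trans (le_max_right _ _), max_lt h1x h1, fun L hL hL1 g hg => ?_⟩
    rw [Finset.forall_mem_insert]
    exact ⟨hx L (le_of_max_le_left hL) hL1 g hg, hs L (le_of_max_le_right hL) hL1 g hg⟩

lemma exists_isIsomEmb_real (h : MinUnivFor M17 X) : ∃ φ : X → ℝ, IsIsomEmb φ := by
  classical
  obtain ⟨g, hg⟩ := univFor_M17_iff.1 h.1 (1 / 2) (by norm_num) (by norm_num)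
  let s₀ : Icc (0 : ℝ) (1 / 2) := ⟨0, by norm_num⟩
  let s₁ : Icc (0 : ℝ) (1 / 2) := ⟨1 / 2, by norm_num⟩
  refine ⟨fun z => dist z (g s₀) ^ 2 - dist z (g s₁) ^ 2, fun x y => ?_⟩
  obtain ⟨ℓ, h0, h1, hℓ⟩ := h.exists_forall_mem_range_of_long {x, y, g s₀, g s₁}
  obtain ⟨f, hf⟩ := univFor_M17_iff.1 h.1 ℓ h0 h1
  have hsub := hℓ ℓ le_rfl h1 f hf
  obtain ⟨s, rfl⟩ := hsub x (by simp)
  obtain ⟨t, rfl⟩ := hsub y (by simp)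
  obtain ⟨t₀, ht₀⟩ := hsub (g s₀) (by simp)
  obtain ⟨t₁, ht₁⟩ := hsub (g s₁) (by simp)
  have h01 : dist t₀ t₁ = 1 / 2 := by
    rw [← hf, ht₀, ht₁, hg, Subtype.dist_eq, Real.dist_eq]; norm_num
  simpa only [ht₀, ht₁] using dist_sq_sub_dist_sq_of_isIsomEmb hf h01 s t

variable {φ : X → ℝ}

lemma exists_Icc_subset_range (h : MinUnivFor M17 X) (hφ : IsIsomEmb φ) (L : ℝ) (h0 : 0 ≤ L)
    (h1 : L < 1) :
    ∃ c, Icc c (c + L) ⊆ range φ := by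
  obtain ⟨g, hg⟩ := univFor_M17_iff.1 h.1 L h0 h1
  obtain ⟨c, hc⟩ := (hφ.comp hg).exists_Icc_subset_range h0
  exact ⟨c, hc.trans (range_comp_subset_range _ _)⟩

lemma exists_Icc_subset_range_of_mem (h : MinUnivFor M17 X) (hφ : IsIsomEmb φ)
    (x y : X) :
    ∃ c L, L < 1 ∧ Icc c (c + L) ⊆ range φ ∧ φ x ∈ Icc c (c + L) ∧ φ y ∈ Icc c (c + L) := by
  classical
  obtain ⟨ℓ, h0, h1, hℓ⟩ := h.exists_forall_mem_range_of_long {x, y}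
  obtain ⟨c, hc⟩ := h.exists_Icc_subset_range hφ ℓ h0 h1
  obtain ⟨w, hw, hφw⟩ := hφ.exists_lift (g := fun u : Icc (0 : ℝ) ℓ => c + u)
    (fun u v => by simp [Subtype.dist_eq, Real.dist_eq])
    (by rintro _ ⟨u, rfl⟩; exact hc ⟨by linarith [u.2.1], by linarith [u.2.2]⟩)
  have hmem : ∀ z ∈ range w, φ z ∈ Icc c (c + ℓ) := by
    rintro _ ⟨u, rfl⟩
    rw [← Function.comp_apply (f := φ), hφw]
    exact ⟨by linarith [u.2.1], by linarith [u.2.2]⟩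
  have hxy := hℓ ℓ le_rfl h1 w hw
  exact ⟨c, ℓ, h1, hc, hmem x (hxy x (by simp)), hmem y (hxy y (by simp))⟩

lemma ordConnected_range (h : MinUnivFor M17 X) (hφ : IsIsomEmb φ) :
    (range φ).OrdConnected := by
  constructor
  rintro _ ⟨x, rfl⟩ _ ⟨y, rfl⟩ t ht
  obtain ⟨c, L, -, hc, hx, hy⟩ := h.exists_Icc_subset_range_of_mem hφ x y
  exact hc ⟨hx.1.trans ht.1, ht.2.trans hy.2⟩

lemma bddBelow_range (h : MinUnivFor M17 X) (hφ : IsIsomEmb φ) (x₀ : X) :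
    BddBelow (range φ) := by
  refine ⟨φ x₀ - 1, ?_⟩
  rintro _ ⟨y, rfl⟩
  obtain ⟨c, L, hL, -, hx, hy⟩ := h.exists_Icc_subset_range_of_mem hφ x₀ y
  linarith [hx.2, hy.1]

end MinUnivFor

lemma IsIsomEmb.isIsometricTo_Ioo {X : Type*} [MetricSpace X] {φ : X → ℝ} (hφ : IsIsomEmb φ)
    {a : ℝ} (h : range φ = Ioo a (a + 1)) : IsIsometricTo X (Ioo (0 : ℝ) 1) := by
  have hmem : ∀ x, φ x ∈ Ioo a (a + 1) := fun x => h ▸ mem_range_self x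
  refine ⟨fun x => ⟨φ x - a, by linarith [(hmem x).1], by linarith [(hmem x).2]⟩,
    fun x y => ?_, ?_⟩
  · rw [Subtype.dist_eq, ← hφ x y, Real.dist_eq, Real.dist_eq, sub_sub_sub_cancel_right]
  · rintro ⟨t, ht0, ht1⟩
    obtain ⟨x, hx⟩ : t + a ∈ range φ := h ▸ ⟨by linarith, by linarith⟩
    exact ⟨x, Subtype.ext (by simp [hx])⟩

lemma MinUnivFor.isIsometricTo_Ioo {X : Type*} [MetricSpace X] (h : MinUnivFor M17 X) :
    IsIsometricTo X (Ioo (0 : ℝ) 1) := by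
  obtain ⟨φ, hφ⟩ := h.exists_isIsomEmb_real
  obtain ⟨g, -⟩ := univFor_M17_iff.1 h.1 0 le_rfl one_pos
  let x₀ := g ⟨0, le_rfl, le_rfl⟩
  set a := sInf (range φ)
  have hsub : Ioo a (a + 1) ⊆ range φ :=
    Ioo_csInf_subset_of_forall_exists_Icc_subset (h.ordConnected_range hφ)
      (h.bddBelow_range hφ x₀) ⟨φ x₀, mem_range_self x₀⟩ (h.exists_Icc_subset_range hφ)
  have hpre : φ ⁻¹' Ioo a (a + 1) = univ := h.2 _ ((univFor_Ioo (by simp)).preimage hφ hsub)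
  refine hφ.isIsometricTo_Ioo (hsub.antisymm' ?_)
  rintro _ ⟨x, rfl⟩
  exact (hpre ▸ mem_univ x : x ∈ φ ⁻¹' Ioo a (a + 1))

/-- The open interval `(0, 1)` is a minimal universal metric space for the family of all
closed intervals of length `< 1`, and every minimal universal metric space for this family
is isometric to `(0, 1)`. -/
theorem statement17 :
    MinUnivFor M17 ↥(Set.Ioo (0 : ℝ) 1) ∧
    ∀ (X : Type u) [MetricSpace X],
      MinUnivFor M17 X → IsIsometricTo X ↥(Set.Ioo (0 : ℝ) 1) :=
  ⟨minUnivFor_Ioo_zero_one, fun _ _ h => h.isIsometricTo_Ioo⟩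
end
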